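/- For any nonnegative integer n, ∑_{a₁+a₂=n+1} ζ(ā₁+1, ā₂+1) = ζ̄(1)·ζ(n+2) − ζ(1̄, n+2), where the sum is over pairs of nonnegative integers (a₁, a₂) with a₁+a₂ = n+1. -/

import Mathlib

open Filter

/-- Limit of partial sums (handles conditionally convergent series). -/
noncomputable def plim (f : ℕ → ℝ) : ℝ := limUnder atTop f

/-- Riemann zeta value `ζ(s) = ∑_{k ≥ 1} 1/k^s`. -/
noncomputable def zetaV (s : ℕ) : ℝ :=
  plim fun N => ∑ k ∈ Finset.Ico 1 (N + 1), 1 / (k : ℝ) ^ s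

/-- Alternating zeta value `ζ̄(s) = ∑_{k ≥ 1} (-1)^k/k^s`. -/
noncomputable def zetaBar (s : ℕ) : ℝ :=
  plim fun N => ∑ k ∈ Finset.Ico 1 (N + 1), (-1 : ℝ) ^ k / (k : ℝ) ^ s

/-- Double zeta value `ζ(a,b) = ∑_{1 ≤ k₁ < k₂} 1/(k₁^a k₂^b)`. -/
noncomputable def zeta2 (a b : ℕ) : ℝ :=
  plim fun N => ∑ k₂ ∈ Finset.Ico 1 (N + 1), ∑ k₁ ∈ Finset.Ico 1 k₂,
    1 / ((k₁ : ℝ) ^ a * (k₂ : ℝ) ^ b)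

/-- `ζ(a, b̄) = ∑_{1 ≤ k₁ < k₂} (-1)^{k₂}/(k₁^a k₂^b)` (sign on the outer index). -/
noncomputable def zeta2barO (a b : ℕ) : ℝ :=
  plim fun N => ∑ k₂ ∈ Finset.Ico 1 (N + 1), ∑ k₁ ∈ Finset.Ico 1 k₂,
    (-1 : ℝ) ^ k₂ / ((k₁ : ℝ) ^ a * (k₂ : ℝ) ^ b)

/-- `ζ(ā, b) = ∑_{1 ≤ k₁ < k₂} (-1)^{k₁}/(k₁^a k₂^b)` (sign on the inner index). -/
noncomputable def zeta2barI (a b : ℕ) : ℝ :=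
  plim fun N => ∑ k₂ ∈ Finset.Ico 1 (N + 1), ∑ k₁ ∈ Finset.Ico 1 k₂,
    (-1 : ℝ) ^ k₁ / ((k₁ : ℝ) ^ a * (k₂ : ℝ) ^ b)

/-- `ζ(ā, b̄) = ∑_{1 ≤ k₁ < k₂} (-1)^{k₁+k₂}/(k₁^a k₂^b)`. -/
noncomputable def zeta2barB (a b : ℕ) : ℝ :=
  plim fun N => ∑ k₂ ∈ Finset.Ico 1 (N + 1), ∑ k₁ ∈ Finset.Ico 1 k₂,
    (-1 : ℝ) ^ (k₁ + k₂) / ((k₁ : ℝ) ^ a * (k₂ : ℝ) ^ b)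

/-- Multiple zeta value `ζ(α₁,…,α_r)`. -/
noncomputable def mzv {r : ℕ} (α : Fin r → ℕ) : ℝ :=
  ∑' k : {f : Fin r → ℕ // StrictMono f ∧ ∀ i, 1 ≤ f i},
    ∏ i, 1 / ((k.1 i : ℝ) ^ α i)

/-- Multiple zeta-star value `ζ⋆(α₁,…,α_r)`. -/
noncomputable def mzvStar {r : ℕ} (α : Fin r → ℕ) : ℝ :=
  ∑' k : {f : Fin r → ℕ // Monotone f ∧ ∀ i, 1 ≤ f i},
    ∏ i, 1 / ((k.1 i : ℝ) ^ α i)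

/-- Height-one MZV `ζ({1}^a, b+2)`. -/
noncomputable def heightOne (a b : ℕ) : ℝ :=
  mzv (Fin.snoc (fun _ : Fin a => 1) (b + 2))

/-- Height-one zeta-star value `ζ⋆({1}^a, b+2)`. -/
noncomputable def heightOneStar (a b : ℕ) : ℝ :=
  mzvStar (Fin.snoc (fun _ : Fin a => 1) (b + 2))

/-!
For `1 ≤ k₁ < k₂` the partial fraction identity
`∑_{a < s} 1 / (k₁^(a+1) k₂^(s-a)) = (k₁^(-s) - k₂^(-s)) / (k₂ - k₁)` collapses the sum over `a`,
and `(-1)^(k₁+k₂) = (-1)^(k₂-k₁)`. Substituting `d = k₂ - k₁`, the `k₁^(-s)` part of the `N`-th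
partial sum is the Cauchy product `∑_{k ≤ N} k^(-s) ∑_{d ≤ N-k} (-1)^d / d`, which tends to
`ζ̄(1) ζ(s)` by dominated convergence; reflecting `k₁ ↦ k₂ - k₁`, the `k₂^(-s)` part is exactly the
`N`-th partial sum of `ζ(1̄, s)`. The conditionally convergent `ζ(ā, b̄)` converge because their
inner sums are `ζ̄(a)` up to an error `O(k₂^(-a))`, by the alternating series test.
-/

open Finset Topology

theorem Antitone.abs_sub_alternating_series_le {f : ℕ → ℝ} {l : ℝ}
    (hfl : Tendsto (fun n ↦ ∑ i ∈ range n, (-1) ^ i * f i) atTop (𝓝 l)) (hfa : Antitone f)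
    (n : ℕ) : |l - ∑ i ∈ range n, (-1) ^ i * f i| ≤ f n := by
  obtain ⟨k, rfl | rfl⟩ := Nat.even_or_odd' n
  · have hlow := hfa.alternating_series_le_tendsto hfl k
    have hupp := hfa.tendsto_le_alternating_series hfl k
    rw [sum_range_succ, pow_mul, neg_one_sq, one_pow, one_mul] at hupp
    rw [abs_le]
    constructor <;> linarith
  · have hlow := hfa.alternating_series_le_tendsto hfl (k + 1)
    have hupp := hfa.tendsto_le_alternating_series hfl k
    rw [mul_add, mul_one, sum_range_succ, pow_succ, pow_mul, neg_one_sq, one_pow] at hlow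
    rw [abs_le]
    constructor <;> linarith

theorem HasSum.tendsto_sum_Ico_one {G : Type*} [AddCommGroup G] [TopologicalSpace G]
    [IsTopologicalAddGroup G] {f : ℕ → G} {l : G} (h : HasSum f l) :
    Tendsto (fun N ↦ ∑ k ∈ Ico 1 (N + 1), f k) atTop (𝓝 (l - f 0)) := by
  refine ((h.tendsto_sum_nat.comp (tendsto_add_atTop_nat 1)).sub_const (f 0)).congr fun N ↦ ?_
  simp [sum_range_eq_add_Ico f N.succ_pos]

theorem Summable.tendsto_sum_range_mul_of_tendsto {a b : ℕ → ℝ} {L : ℝ} (ha : Summable a)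
    (hb : Tendsto b atTop (𝓝 L)) :
    Tendsto (fun N ↦ ∑ k ∈ range (N + 1), a k * b (N - k)) atTop (𝓝 ((∑' k, a k) * L)) := by
  obtain ⟨C, hC⟩ := isBounded_iff_forall_norm_le.mp (Metric.isBounded_range_of_tendsto b hb)
  have hbC (m : ℕ) : |b m| ≤ C := hC _ ⟨m, rfl⟩
  let F (N k : ℕ) : ℝ := if k ≤ N then a k * b (N - k) else 0
  have hF (k : ℕ) : Tendsto (F · k) atTop (𝓝 (a k * L)) := by
    refine ((hb.comp (tendsto_sub_atTop_nat k)).const_mul (a k)).congr' ?_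
    filter_upwards [eventually_ge_atTop k] with N hN
    simp [F, hN]
  have hFC (N k : ℕ) : ‖F N k‖ ≤ |a k| * C := by
    by_cases hk : k ≤ N
    · simpa [F, hk, abs_mul] using mul_le_mul_of_nonneg_left (hbC _) (abs_nonneg (a k))
    · simpa [F, hk] using mul_nonneg (abs_nonneg (a k)) ((abs_nonneg _).trans (hbC 0))
  have hlim := tendsto_tsum_of_dominated_convergence (ha.abs.mul_right C) hF
    (Eventually.of_forall hFC)
  rw [tsum_mul_right] at hlim
  refine hlim.congr fun N ↦ ?_
  rw [tsum_eq_sum (s := range (N + 1)) fun k hk ↦ by simp_all [F]]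
  exact sum_congr rfl fun k hk ↦ by simp [F, Nat.lt_succ_iff.mp (mem_range.mp hk)]

theorem sum_range_one_div_pow_mul_pow {K : Type*} [Field K] {x y : K} (hx : x ≠ 0) (hy : y ≠ 0)
    (hxy : x ≠ y) (s : ℕ) :
    ∑ a ∈ range s, 1 / (x ^ (a + 1) * y ^ (s - a)) = (1 / x ^ s - 1 / y ^ s) / (y - x) := by
  have hterm : ∀ a ∈ range s,
      1 / (x ^ (a + 1) * y ^ (s - a)) = x⁻¹ * y⁻¹ * (x⁻¹ ^ a * y⁻¹ ^ (s - 1 - a)) := by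
    intro a ha
    rw [show s - a = s - 1 - a + 1 by rw [mem_range] at ha; omega, inv_pow, inv_pow]
    field_simp
    ring
  rw [sum_congr rfl hterm, ← mul_sum, eq_div_iff (sub_ne_zero.mpr hxy.symm), one_div, one_div,
    ← inv_pow, ← inv_pow, ← geom_sum₂_mul]
  field_simp

theorem neg_one_pow_add_eq_neg_one_pow_sub {R : Type*} [Monoid R] [HasDistribNeg R] {m n : ℕ}
    (h : m ≤ n) : (-1 : R) ^ (m + n) = (-1) ^ (n - m) := by
  obtain ⟨d, rfl⟩ := Nat.exists_eq_add_of_le h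
  rw [Nat.add_sub_cancel_left, ← add_assoc, pow_add, Even.neg_one_pow ⟨m, rfl⟩, one_mul]

noncomputable def zetaBarPartial (s M : ℕ) : ℝ := ∑ k ∈ Ico 1 M, (-1 : ℝ) ^ k / (k : ℝ) ^ s

theorem zetaBarPartial_succ (s j : ℕ) :
    zetaBarPartial s (j + 1) = -∑ i ∈ range j, (-1) ^ i * (1 / ((i : ℝ) + 1) ^ s) := by
  rw [zetaBarPartial, sum_Ico_eq_sum_range, Nat.add_sub_cancel, ← sum_neg_distrib]
  refine sum_congr rfl fun i _ ↦ ?_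
  push_cast
  ring

theorem antitone_one_div_add_one_pow (s : ℕ) : Antitone fun i : ℕ ↦ 1 / ((i : ℝ) + 1) ^ s :=
  fun _ _ hij ↦ one_div_le_one_div_of_le (by positivity) (by gcongr)

theorem tendsto_alternating_series_neg_zetaBar {s : ℕ} (hs : s ≠ 0) :
    Tendsto (fun n ↦ ∑ i ∈ range n, (-1) ^ i * (1 / ((i : ℝ) + 1) ^ s)) atTop
      (𝓝 (-zetaBar s)) := by
  have hzero : Tendsto (fun i : ℕ ↦ 1 / ((i : ℝ) + 1) ^ s) atTop (𝓝 0) := by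
    have := (tendsto_one_div_add_atTop_nhds_zero_nat (𝕜 := ℝ)).pow s
    rw [zero_pow hs] at this
    exact this.congr fun i ↦ one_div_pow _ _
  obtain ⟨l, hl⟩ := (antitone_one_div_add_one_pow s).tendsto_alternating_series_of_tendsto_zero hzero
  have hbar : zetaBar s = -l :=
    (hl.neg.congr fun j ↦ (zetaBarPartial_succ s j).symm).limUnder_eq
  rwa [hbar, neg_neg]

theorem tendsto_zetaBarPartial {s : ℕ} (hs : s ≠ 0) :
    Tendsto (zetaBarPartial s) atTop (𝓝 (zetaBar s)) := by
  rw [← tendsto_add_atTop_iff_nat 1]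
  simpa [zetaBarPartial_succ] using (tendsto_alternating_series_neg_zetaBar hs).neg

theorem abs_zetaBar_sub_zetaBarPartial_le {s : ℕ} (hs : s ≠ 0) (j : ℕ) :
    |zetaBar s - zetaBarPartial s (j + 1)| ≤ 1 / ((j : ℝ) + 1) ^ s := by
  have := Antitone.abs_sub_alternating_series_le (tendsto_alternating_series_neg_zetaBar hs)
    (antitone_one_div_add_one_pow s) j
  rw [zetaBarPartial_succ, ← abs_neg]
  convert this using 2
  ring

theorem zetaV_eq_tsum {s : ℕ} (hs : 1 < s) : zetaV s = ∑' k : ℕ, 1 / (k : ℝ) ^ s := by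
  have := (Real.summable_one_div_nat_pow.mpr hs).hasSum.tendsto_sum_Ico_one
  rw [Nat.cast_zero, zero_pow (by omega), div_zero, sub_zero] at this
  exact this.limUnder_eq

theorem exists_tendsto_sum_mul_zetaBarPartial {c : ℕ → ℝ} {C : ℝ} {s t : ℕ} (hs : s ≠ 0)
    (hst : 1 < s + t) (hc : Tendsto (fun N ↦ ∑ k ∈ Ico 1 (N + 1), c k) atTop (𝓝 C))
    (hct : ∀ k, |c k| ≤ 1 / (k : ℝ) ^ t) :
    ∃ l, Tendsto (fun N ↦ ∑ k ∈ Ico 1 (N + 1), c k * zetaBarPartial s k) atTop (𝓝 l) := by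
  set e : ℕ → ℝ := fun k ↦ c k * (zetaBarPartial s k - zetaBar s)
  have he : Summable e := by
    refine (Real.summable_one_div_nat_pow.mpr hst).of_norm_bounded_eventually_nat ?_
    filter_upwards [eventually_ge_atTop 1] with k hk
    obtain ⟨j, rfl⟩ := Nat.exists_eq_add_of_le' hk
    have htail := abs_zetaBar_sub_zetaBarPartial_le hs j
    rw [abs_sub_comm] at htail
    calc ‖e (j + 1)‖ = |c (j + 1)| * |zetaBarPartial s (j + 1) - zetaBar s| := abs_mul _ _
      _ ≤ 1 / ((j : ℝ) + 1) ^ t * (1 / ((j : ℝ) + 1) ^ s) := by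
        gcongr
        exact_mod_cast hct (j + 1)
      _ = 1 / ((j + 1 : ℕ) : ℝ) ^ (s + t) := by
        push_cast
        ring
  refine ⟨C * zetaBar s + (∑' k, e k - e 0),
    ((hc.mul_const _).add he.hasSum.tendsto_sum_Ico_one).congr fun N ↦ ?_⟩
  rw [sum_mul, ← sum_add_distrib]
  exact sum_congr rfl fun k _ ↦ by ring

theorem sum_Ico_neg_one_pow_add_div_pow_mul_pow (a b k₂ : ℕ) :
    ∑ k₁ ∈ Ico 1 k₂, (-1 : ℝ) ^ (k₁ + k₂) / ((k₁ : ℝ) ^ a * (k₂ : ℝ) ^ b) =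
      (-1) ^ k₂ / (k₂ : ℝ) ^ b * zetaBarPartial a k₂ := by
  rw [zetaBarPartial, mul_sum]
  exact sum_congr rfl fun k₁ _ ↦ by rw [pow_add]; ring

theorem tendsto_zeta2barB {a b : ℕ} (ha : a ≠ 0) (hb : b ≠ 0) :
    Tendsto (fun N : ℕ ↦ ∑ k₂ ∈ Ico 1 (N + 1), ∑ k₁ ∈ Ico 1 k₂,
      (-1 : ℝ) ^ (k₁ + k₂) / ((k₁ : ℝ) ^ a * (k₂ : ℝ) ^ b)) atTop (𝓝 (zeta2barB a b)) := by
  simp_rw [zeta2barB, plim, sum_Ico_neg_one_pow_add_div_pow_mul_pow]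
  refine tendsto_nhds_limUnder (exists_tendsto_sum_mul_zetaBarPartial (t := b) ha (by omega)
    ((tendsto_add_atTop_iff_nat 1).mpr (tendsto_zetaBarPartial hb)) fun k ↦ ?_)
  simp [abs_div]

theorem tendsto_zeta2barI {a b : ℕ} (ha : a ≠ 0) (hb : 1 < b) :
    Tendsto (fun N : ℕ ↦ ∑ k ∈ Ico 1 (N + 1), 1 / (k : ℝ) ^ b * zetaBarPartial a k) atTop
      (𝓝 (zeta2barI a b)) := by
  have hinner (k₂ : ℕ) : ∑ k₁ ∈ Ico 1 k₂, (-1 : ℝ) ^ k₁ / ((k₁ : ℝ) ^ a * (k₂ : ℝ) ^ b) =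
      1 / (k₂ : ℝ) ^ b * zetaBarPartial a k₂ := by
    rw [zetaBarPartial, mul_sum]
    exact sum_congr rfl fun k₁ _ ↦ by ring
  have hζ := (Real.summable_one_div_nat_pow.mpr hb).hasSum.tendsto_sum_Ico_one
  simp_rw [zeta2barI, plim, hinner]
  exact tendsto_nhds_limUnder (exists_tendsto_sum_mul_zetaBarPartial ha (by omega) hζ
    fun k ↦ (abs_of_nonneg (by positivity)).le)

theorem tendsto_cauchyProduct_zetaV_zetaBar {a s : ℕ} (ha : a ≠ 0) (hs : 1 < s) :
    Tendsto (fun N : ℕ ↦ ∑ k ∈ Ico 1 (N + 1), 1 / (k : ℝ) ^ s * zetaBarPartial a (N + 1 - k))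
      atTop (𝓝 (zetaBar a * zetaV s)) := by
  have := (Real.summable_one_div_nat_pow.mpr hs).tendsto_sum_range_mul_of_tendsto
    ((tendsto_add_atTop_iff_nat 1).mpr (tendsto_zetaBarPartial ha))
  rw [← zetaV_eq_tsum hs, mul_comm] at this
  refine this.congr fun N ↦ ?_
  rw [sum_range_eq_add_Ico _ N.succ_pos, Nat.cast_zero, zero_pow (by omega), div_zero, zero_mul,
    zero_add]
  refine sum_congr rfl fun k hk ↦ ?_
  rw [mem_Ico] at hk
  rw [show N - k + 1 = N + 1 - k by omega]

theorem sum_Ico_neg_one_pow_add_div_sub_left (k₁ M : ℕ) :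
    ∑ k₂ ∈ Ico (k₁ + 1) M, (-1 : ℝ) ^ (k₁ + k₂) / ((k₂ : ℝ) - k₁) = zetaBarPartial 1 (M - k₁) := by
  rw [zetaBarPartial, sum_Ico_eq_sum_range, sum_Ico_eq_sum_range, Nat.sub_sub]
  refine sum_congr rfl fun d _ ↦ ?_
  rw [neg_one_pow_add_eq_neg_one_pow_sub (by omega), show k₁ + 1 + d - k₁ = 1 + d by omega]
  push_cast
  ring

theorem sum_Ico_neg_one_pow_add_div_sub_right (k₂ : ℕ) :
    ∑ k₁ ∈ Ico 1 k₂, (-1 : ℝ) ^ (k₁ + k₂) / ((k₂ : ℝ) - k₁) = zetaBarPartial 1 k₂ := by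
  have hreflect := sum_Ico_reflect (fun d ↦ (-1 : ℝ) ^ d / (d : ℝ) ^ 1) 1 k₂.le_succ
  rw [Nat.add_sub_cancel_left, Nat.add_sub_cancel] at hreflect
  rw [zetaBarPartial, ← hreflect]
  refine sum_congr rfl fun k₁ hk₁ ↦ ?_
  rw [mem_Ico] at hk₁
  rw [neg_one_pow_add_eq_neg_one_pow_sub hk₁.2.le, Nat.cast_sub hk₁.2.le, pow_one]

theorem sum_zeta2barB_partialSum_eq (s N : ℕ) :
    ∑ a ∈ range s, ∑ k₂ ∈ Ico 1 (N + 1), ∑ k₁ ∈ Ico 1 k₂,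
        (-1 : ℝ) ^ (k₁ + k₂) / ((k₁ : ℝ) ^ (a + 1) * (k₂ : ℝ) ^ (s - a)) =
      ∑ k ∈ Ico 1 (N + 1), 1 / (k : ℝ) ^ s * zetaBarPartial 1 (N + 1 - k) -
        ∑ k ∈ Ico 1 (N + 1), 1 / (k : ℝ) ^ s * zetaBarPartial 1 k := by
  have hpair (k₂ k₁ : ℕ) (hk₁ : k₁ ∈ Ico 1 k₂) :
      ∑ a ∈ range s, (-1 : ℝ) ^ (k₁ + k₂) / ((k₁ : ℝ) ^ (a + 1) * (k₂ : ℝ) ^ (s - a)) =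
        1 / (k₁ : ℝ) ^ s * ((-1) ^ (k₁ + k₂) / ((k₂ : ℝ) - k₁)) -
          1 / (k₂ : ℝ) ^ s * ((-1) ^ (k₁ + k₂) / ((k₂ : ℝ) - k₁)) := by
    rw [mem_Ico] at hk₁
    have hk₁₀ : (0 : ℝ) < k₁ := by exact_mod_cast hk₁.1
    have hk₁₂ : (k₁ : ℝ) < k₂ := by exact_mod_cast hk₁.2
    simp_rw [div_eq_mul_one_div ((-1 : ℝ) ^ (k₁ + k₂)), ← mul_sum]
    rw [sum_range_one_div_pow_mul_pow hk₁₀.ne' (hk₁₀.trans hk₁₂).ne' hk₁₂.ne]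
    ring
  calc _ = ∑ k₂ ∈ Ico 1 (N + 1), ∑ k₁ ∈ Ico 1 k₂, ∑ a ∈ range s,
        (-1 : ℝ) ^ (k₁ + k₂) / ((k₁ : ℝ) ^ (a + 1) * (k₂ : ℝ) ^ (s - a)) := by
        rw [sum_comm]
        exact sum_congr rfl fun _ _ ↦ sum_comm
    _ = ∑ k₂ ∈ Ico 1 (N + 1), ∑ k₁ ∈ Ico 1 k₂,
          1 / (k₁ : ℝ) ^ s * ((-1) ^ (k₁ + k₂) / ((k₂ : ℝ) - k₁)) -
        ∑ k₂ ∈ Ico 1 (N + 1), ∑ k₁ ∈ Ico 1 k₂,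
          1 / (k₂ : ℝ) ^ s * ((-1) ^ (k₁ + k₂) / ((k₂ : ℝ) - k₁)) := by
        rw [← sum_sub_distrib]
        exact sum_congr rfl fun k₂ _ ↦ by rw [← sum_sub_distrib]; exact sum_congr rfl (hpair k₂)
    _ = _ := by
        rw [← sum_Ico_Ico_comm']
        congr 1
        · exact sum_congr rfl fun k₁ _ ↦ by
            rw [← mul_sum, sum_Ico_neg_one_pow_add_div_sub_left]
        · exact sum_congr rfl fun k₂ _ ↦ by
            rw [← mul_sum, sum_Ico_neg_one_pow_add_div_sub_right]

theorem alternating_double_sum_formula_both (n : ℕ) :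
    ∑ a ∈ Finset.range (n + 2), zeta2barB (a + 1) (n + 1 - a + 1) =
      zetaBar 1 * zetaV (n + 2) - zeta2barI 1 (n + 2) := by
  have hexp : ∀ a ∈ range (n + 2), n + 1 - a + 1 = n + 2 - a := fun a ha ↦ by
    rw [mem_range] at ha
    omega
  rw [sum_congr rfl fun a ha ↦ by rw [hexp a ha]]
  have hterms := tendsto_finsetSum (range (n + 2)) fun a ha ↦
    tendsto_zeta2barB a.succ_ne_zero (by rw [mem_range] at ha; omega : n + 2 - a ≠ 0)
  have hcauchy := tendsto_cauchyProduct_zetaV_zetaBar one_ne_zero (show 1 < n + 2 by omega)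
  have hI := tendsto_zeta2barI one_ne_zero (show 1 < n + 2 by omega)
  exact tendsto_nhds_unique hterms
    ((hcauchy.sub hI).congr fun N ↦ (sum_zeta2barB_partialSum_eq (n + 2) N).symm)
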